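/- arXiv:0704.0704 — 7 statements merged into one kernel-verified Lean document; each statement's English description precedes it below -/
import Mathlib

section
/- For right-continuous nondecreasing functions g₁, g₂ : [0,1] → [0,1], the L¹ distance between g₁ and g₂ equals the L¹ distance between their generalized inverses: ∫₀¹|g₁(t) − g₂(t)| dt = ∫₀¹|g₁⁻¹(t) − g₂⁻¹(t)| dt. -/
/-!
Both integrals compute the area of `regionBelow g₁ ∆ regionBelow g₂`, where `regionBelow g` is
the part of the unit square strictly below the graph of `g`. Its vertical slice at `t` is an
interval of length `|g₁ t - g₂ t|`. Its horizontal slice at `s < 1` is the symmetric difference of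
the superlevel sets `{t | s < gᵢ t}`, and by monotonicity each of these is, up to an endpoint, the
interval `(gᵢ⁻¹ s, 1]`; so that slice has length `|g₁⁻¹ s - g₂⁻¹ s|`.
-/

open MeasureTheory

/-- Generalized inverse `g⁻¹(t) = inf{s ∈ [0,1] : g(s) > t}` of a nondecreasing
map `g : [0,1] → [0,1]`. -/
noncomputable def genInv (g : ℝ → ℝ) (t : ℝ) : ℝ :=
  sInf {s : ℝ | s ∈ Set.Icc (0:ℝ) 1 ∧ t < g s}
open Set
open scoped symmDiff

theorem Set.Ico_symmDiff_Ico_of_le {α : Type*} [LinearOrder α] {a b c : α} (hb : a ≤ b)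
    (hc : a ≤ c) : Ico a b ∆ Ico a c = Ico (min b c) (max b c) := by
  ext x
  simp only [mem_symmDiff, mem_Ico]
  grind

theorem Set.Ioc_symmDiff_Ioc_of_le {α : Type*} [LinearOrder α] {a b c : α} (ha : a ≤ c)
    (hb : b ≤ c) : Ioc a c ∆ Ioc b c = Ioc (min a b) (max a b) := by
  ext x
  simp only [mem_symmDiff, mem_Ioc]
  grind

theorem Real.volume_Ico_symmDiff_Ico {a b c : ℝ} (hb : a ≤ b) (hc : a ≤ c) :
    volume (Ico a b ∆ Ico a c) = ENNReal.ofReal |b - c| := by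
  rw [Ico_symmDiff_Ico_of_le hb hc, Real.volume_Ico, max_sub_min_eq_abs']

theorem Real.volume_Ioc_symmDiff_Ioc {a b c : ℝ} (ha : a ≤ c) (hb : b ≤ c) :
    volume (Ioc a c ∆ Ioc b c) = ENNReal.ofReal |a - b| := by
  rw [Ioc_symmDiff_Ioc_of_le ha hb, Real.volume_Ioc, max_sub_min_eq_abs']

def regionBelow (g : ℝ → ℝ) : Set (ℝ × ℝ) :=
  {p | p ∈ Icc (0:ℝ) 1 ×ˢ Icc (0:ℝ) 1 ∧ p.2 < g p.1}

theorem measurableSet_regionBelow {g : ℝ → ℝ} (hg : Measurable g) :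
    MeasurableSet (regionBelow g) :=
  (measurableSet_Icc.prod measurableSet_Icc).inter
    (measurableSet_lt measurable_snd (hg.comp measurable_fst))

theorem mk_preimage_regionBelow_left {g : ℝ → ℝ} {t : ℝ} (ht : t ∈ Icc (0:ℝ) 1) (hgt : g t ≤ 1) :
    Prod.mk t ⁻¹' regionBelow g = Ico 0 (g t) := by
  ext s
  simp only [regionBelow, mem_preimage, mem_ofPred_eq, mem_prod, ht, true_and]
  constructor
  · rintro ⟨⟨hs0, -⟩, hs⟩
    exact ⟨hs0, hs⟩
  · rintro ⟨hs0, hs⟩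
    exact ⟨⟨hs0, hs.le.trans hgt⟩, hs⟩

theorem mk_preimage_regionBelow_left_eq_empty {g : ℝ → ℝ} {t : ℝ} (ht : t ∉ Icc (0:ℝ) 1) :
    Prod.mk t ⁻¹' regionBelow g = ∅ :=
  eq_empty_of_forall_notMem fun _ hs => ht hs.1.1

theorem mk_preimage_regionBelow_right {g : ℝ → ℝ} {s : ℝ} (hs : s ∈ Icc (0:ℝ) 1) :
    (fun t => (t, s)) ⁻¹' regionBelow g = {t | t ∈ Icc (0:ℝ) 1 ∧ s < g t} := by
  ext t
  simp only [regionBelow, mem_preimage, mem_ofPred_eq, mem_prod, hs, and_true]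

theorem mk_preimage_regionBelow_right_eq_empty {g : ℝ → ℝ} {s : ℝ} (hs : s ∉ Icc (0:ℝ) 1) :
    (fun t => (t, s)) ⁻¹' regionBelow g = ∅ :=
  eq_empty_of_forall_notMem fun _ ht => hs ht.1.2

theorem volume_regionBelow_symmDiff {g₁ g₂ : ℝ → ℝ} (hg₁ : Measurable g₁) (hg₂ : Measurable g₂)
    (hr₁ : MapsTo g₁ (Icc 0 1) (Icc 0 1)) (hr₂ : MapsTo g₂ (Icc 0 1) (Icc 0 1)) :
    volume (regionBelow g₁ ∆ regionBelow g₂) =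
      ∫⁻ t in Icc (0:ℝ) 1, ENNReal.ofReal |g₁ t - g₂ t| := by
  have hslice : ∀ t, volume (Prod.mk t ⁻¹' (regionBelow g₁ ∆ regionBelow g₂)) =
      (Icc (0:ℝ) 1).indicator (fun t => ENNReal.ofReal |g₁ t - g₂ t|) t := by
    intro t
    by_cases ht : t ∈ Icc (0:ℝ) 1
    · rw [preimage_symmDiff, mk_preimage_regionBelow_left ht (hr₁ ht).2,
        mk_preimage_regionBelow_left ht (hr₂ ht).2, indicator_of_mem ht,
        Real.volume_Ico_symmDiff_Ico (hr₁ ht).1 (hr₂ ht).1]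
    · rw [preimage_symmDiff, mk_preimage_regionBelow_left_eq_empty ht,
        mk_preimage_regionBelow_left_eq_empty ht, symmDiff_self, indicator_of_notMem ht,
        bot_eq_empty, measure_empty]
  rw [Measure.volume_eq_prod, Measure.prod_apply
    ((measurableSet_regionBelow hg₁).symmDiff (measurableSet_regionBelow hg₂)),
    ← lintegral_indicator measurableSet_Icc]
  simp_rw [hslice]

theorem genInv_congr {g g' : ℝ → ℝ} (h : EqOn g g' (Icc 0 1)) : genInv g = genInv g' := by
  funext s
  unfold genInv
  congr 1
  ext t
  simp only [mem_ofPred_eq, and_congr_right_iff]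
  intro ht
  rw [h ht]

theorem genInv_le_one {g : ℝ → ℝ} {s : ℝ} (hs : s < g 1) : genInv g s ≤ 1 :=
  csInf_le ⟨0, fun _ ht => ht.1.1⟩ ⟨right_mem_Icc.2 zero_le_one, hs⟩

theorem monotoneOn_genInv (g : ℝ → ℝ) : MonotoneOn (genInv g) (Iio (g 1)) := by
  intro s _ s' hs' hss'
  refine csInf_le_csInf ⟨0, fun _ ht => ht.1.1⟩ ⟨1, right_mem_Icc.2 zero_le_one, hs'⟩ ?_
  exact fun t ht => ⟨ht.1, hss'.trans_lt ht.2⟩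

theorem aemeasurable_genInv {g : ℝ → ℝ} (h1 : g 1 = 1) :
    AEMeasurable (genInv g) (volume.restrict (Icc 0 1)) := by
  rw [← Measure.restrict_congr_set Ico_ae_eq_Icc]
  refine (aemeasurable_restrict_of_monotoneOn measurableSet_Iio (monotoneOn_genInv g)).mono_set ?_
  rw [h1]
  exact fun s hs => hs.2

theorem setOf_lt_ae_eq_Ioc_genInv {g : ℝ → ℝ} (hg : MonotoneOn g (Icc 0 1)) {s : ℝ}
    (hs : s < g 1) :
    {t | t ∈ Icc (0:ℝ) 1 ∧ s < g t} =ᵐ[volume] Ioc (genInv g s) 1 := by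
  set S := {t | t ∈ Icc (0:ℝ) 1 ∧ s < g t}
  have hne : S.Nonempty := ⟨1, right_mem_Icc.2 zero_le_one, hs⟩
  have hsub : Ioc (genInv g s) 1 ⊆ S := by
    rintro t ⟨hst, ht1⟩
    obtain ⟨u, hu, hut⟩ := exists_lt_of_csInf_lt hne hst
    have ht : t ∈ Icc (0:ℝ) 1 := ⟨hu.1.1.trans hut.le, ht1⟩
    exact ⟨ht, hu.2.trans_le (hg hu.1 ht hut.le)⟩
  have hsup : S ⊆ Icc (genInv g s) 1 := fun t ht => ⟨csInf_le ⟨0, fun _ hu => hu.1.1⟩ ht, ht.1.2⟩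
  exact (hsup.eventuallyLE.trans Ioc_ae_eq_Icc.symm.le).antisymm hsub.eventuallyLE

theorem volume_regionBelow_symmDiff_eq_lintegral_genInv {g₁ g₂ : ℝ → ℝ} (hg₁ : Monotone g₁)
    (hg₂ : Monotone g₂) (h₁ : g₁ 1 = 1) (h₂ : g₂ 1 = 1) :
    volume (regionBelow g₁ ∆ regionBelow g₂) =
      ∫⁻ s in Icc (0:ℝ) 1, ENNReal.ofReal |genInv g₁ s - genInv g₂ s| := by
  have hslice : ∀ s ∈ Ico (0:ℝ) 1,
      volume ((fun t => (t, s)) ⁻¹' (regionBelow g₁ ∆ regionBelow g₂)) =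
        ENNReal.ofReal |genInv g₁ s - genInv g₂ s| := by
    intro s hs
    have hs₁ : s < g₁ 1 := by rw [h₁]; exact hs.2
    have hs₂ : s < g₂ 1 := by rw [h₂]; exact hs.2
    rw [preimage_symmDiff, mk_preimage_regionBelow_right (Ico_subset_Icc_self hs),
      mk_preimage_regionBelow_right (Ico_subset_Icc_self hs),
      measure_congr ((setOf_lt_ae_eq_Ioc_genInv (hg₁.monotoneOn _) hs₁).symmDiff
        (setOf_lt_ae_eq_Ioc_genInv (hg₂.monotoneOn _) hs₂)),
      Real.volume_Ioc_symmDiff_Ioc (genInv_le_one hs₁) (genInv_le_one hs₂)]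
  have hslice_of_notMem : ∀ s ∉ Icc (0:ℝ) 1,
      volume ((fun t => (t, s)) ⁻¹' (regionBelow g₁ ∆ regionBelow g₂)) = 0 := by
    intro s hs
    rw [preimage_symmDiff, mk_preimage_regionBelow_right_eq_empty hs,
      mk_preimage_regionBelow_right_eq_empty hs, symmDiff_self, bot_eq_empty, measure_empty]
  rw [Measure.volume_eq_prod, Measure.prod_apply_symm ((measurableSet_regionBelow
      hg₁.measurable).symmDiff (measurableSet_regionBelow hg₂.measurable)),
    ← lintegral_indicator measurableSet_Icc]
  refine lintegral_congr_ae ?_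
  filter_upwards [Ico_ae_eq_Icc (a := (0:ℝ)) (b := 1) (μ := volume)] with s hs
  by_cases hsI : s ∈ Icc (0:ℝ) 1
  · rw [indicator_of_mem hsI, hslice s (hs.mpr hsI)]
  · rw [indicator_of_notMem hsI, hslice_of_notMem s hsI]

theorem integral_abs_sub_eq_integral_abs_sub_genInv {g₁ g₂ : ℝ → ℝ} (hg₁ : Monotone g₁)
    (hg₂ : Monotone g₂) (hr₁ : MapsTo g₁ (Icc 0 1) (Icc 0 1))
    (hr₂ : MapsTo g₂ (Icc 0 1) (Icc 0 1)) (h₁ : g₁ 1 = 1) (h₂ : g₂ 1 = 1) :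
    (∫ t in Icc (0:ℝ) 1, |g₁ t - g₂ t|) = ∫ t in Icc (0:ℝ) 1, |genInv g₁ t - genInv g₂ t| := by
  rw [integral_eq_lintegral_of_nonneg_ae (f := fun t => |g₁ t - g₂ t|)
      (ae_of_all _ fun _ => abs_nonneg _)
      (hg₁.measurable.sub hg₂.measurable).abs.aestronglyMeasurable,
    integral_eq_lintegral_of_nonneg_ae (f := fun t => |genInv g₁ t - genInv g₂ t|)
      (ae_of_all _ fun _ => abs_nonneg _)
      ((aemeasurable_genInv h₁).sub (aemeasurable_genInv h₂)).abs.aestronglyMeasurable,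
    ← volume_regionBelow_symmDiff hg₁.measurable hg₂.measurable hr₁ hr₂,
    volume_regionBelow_symmDiff_eq_lintegral_genInv hg₁ hg₂ h₁ h₂]

theorem L1_dist_eq_L1_dist_genInv_general (g₁ g₂ : ℝ → ℝ)
    (hm₁ : MonotoneOn g₁ (Set.Icc 0 1)) (hm₂ : MonotoneOn g₂ (Set.Icc 0 1))
    (hr₁ : ∀ t ∈ Set.Icc (0:ℝ) 1, g₁ t ∈ Set.Icc (0:ℝ) 1)
    (hr₂ : ∀ t ∈ Set.Icc (0:ℝ) 1, g₂ t ∈ Set.Icc (0:ℝ) 1)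
    (h₁ : g₁ 1 = 1) (h₂ : g₂ 1 = 1) :
    (∫ t in Set.Icc (0:ℝ) 1, |g₁ t - g₂ t|) =
      ∫ t in Set.Icc (0:ℝ) 1, |genInv g₁ t - genInv g₂ t| := by
  obtain ⟨G₁, hG₁, hEq₁⟩ := hm₁.exists_monotone_extension
    ⟨0, forall_mem_image.2 fun t ht => (hr₁ t ht).1⟩
    ⟨1, forall_mem_image.2 fun t ht => (hr₁ t ht).2⟩
  obtain ⟨G₂, hG₂, hEq₂⟩ := hm₂.exists_monotone_extension
    ⟨0, forall_mem_image.2 fun t ht => (hr₂ t ht).1⟩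
    ⟨1, forall_mem_image.2 fun t ht => (hr₂ t ht).2⟩
  have h1 : (1:ℝ) ∈ Icc (0:ℝ) 1 := right_mem_Icc.2 zero_le_one
  rw [setIntegral_congr_fun measurableSet_Icc fun t ht => by rw [hEq₁ ht, hEq₂ ht],
    genInv_congr hEq₁, genInv_congr hEq₂]
  exact integral_abs_sub_eq_integral_abs_sub_genInv hG₁ hG₂ (MapsTo.congr hr₁ hEq₁)
    (MapsTo.congr hr₂ hEq₂) (hEq₁ h1 ▸ h₁) (hEq₂ h1 ▸ h₂)

/-- For right-continuous nondecreasing `g₁, g₂ : [0,1] → [0,1]` (with `g(1)=1`), the `L¹`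
distance between them equals the `L¹` distance between their generalized inverses. -/
theorem L1_dist_eq_L1_dist_genInv (g₁ g₂ : ℝ → ℝ)
    (hm₁ : MonotoneOn g₁ (Set.Icc 0 1)) (hm₂ : MonotoneOn g₂ (Set.Icc 0 1))
    (hrc₁ : ∀ t ∈ Set.Ico (0:ℝ) 1, ContinuousWithinAt g₁ (Set.Ici t) t)
    (hrc₂ : ∀ t ∈ Set.Ico (0:ℝ) 1, ContinuousWithinAt g₂ (Set.Ici t) t)
    (hr₁ : ∀ t ∈ Set.Icc (0:ℝ) 1, g₁ t ∈ Set.Icc (0:ℝ) 1)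
    (hr₂ : ∀ t ∈ Set.Icc (0:ℝ) 1, g₂ t ∈ Set.Icc (0:ℝ) 1)
    (h₁ : g₁ 1 = 1) (h₂ : g₂ 1 = 1) :
    (∫ t in Set.Icc (0:ℝ) 1, |g₁ t - g₂ t|) =
      ∫ t in Set.Icc (0:ℝ) 1, |genInv g₁ t - genInv g₂ t| :=
  L1_dist_eq_L1_dist_genInv_general g₁ g₂ hm₁ hm₂ hr₁ hr₂ h₁ h₂
end

section
/- The space G₀ of right-continuous nondecreasing maps from [0,1) to [0,1], regarded as a subset of L²([0,1]), is compact. -/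
/-!
A function of `G₀` is recovered from its values at the rationals as the right limit
`t ↦ inf_{q > t} g q`. Hence `G₀` is the image of the set of monotone maps `ℚ → [0,1]`, compact by
Tychonoff, under the map sending `h` to its rational right limit. That map is continuous into `L²`:
`ℚ → ℝ` is metrizable, and if `hₙ → h` pointwise then the right limits converge at every continuity
point of the limit, so almost everywhere, and bounded a.e. convergence implies `L²` convergence.
-/

open MeasureTheory

/-- The class `G₀` of right-continuous nondecreasing maps `[0,1) → [0,1]`, extended by
`g(1) := 1`, and extended trivially outside `[0,1]`. -/
def IsG0 (g : ℝ → ℝ) : Prop :=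
  MonotoneOn g (Set.Icc 0 1) ∧
  (∀ t ∈ Set.Ico (0:ℝ) 1, g t ∈ Set.Icc (0:ℝ) 1) ∧
  (∀ t ∈ Set.Ico (0:ℝ) 1, ContinuousWithinAt g (Set.Ici t) t) ∧
  g 1 = 1 ∧ (∀ t < (0:ℝ), g t = g 0) ∧ (∀ t > (1:ℝ), g t = 1)

open Filter Topology Set
open scoped ENNReal

theorem isCompact_setOf_monotone_forall_mem_Icc {ι α : Type*} [Preorder ι] [TopologicalSpace α]
    [LinearOrder α] [OrderClosedTopology α] [CompactIccSpace α] (a b : α) :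
    IsCompact {h : ι → α | Monotone h ∧ ∀ i, h i ∈ Icc a b} := by
  convert (isCompact_univ_pi fun _ : ι => isCompact_Icc (a := a) (b := b)).inter_left
    isClosed_monotone using 1
  ext h
  simp only [mem_inter_iff, mem_univ_pi]
  rfl

section UnifIntegrable

variable {α β : Type*} [MeasurableSpace α] [NormedAddCommGroup β] {μ : Measure α} {p : ℝ≥0∞}

theorem unifIntegrable_of_norm_le {ι : Type*} (hp : 1 ≤ p) (hp' : p ≠ ∞) {f : ι → α → β}
    (hf : ∀ i, AEStronglyMeasurable (f i) μ) {C : ℝ} (hC : ∀ i x, ‖f i x‖ ≤ C) :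
    UnifIntegrable f p μ := by
  refine unifIntegrable_of hp hp' hf fun _ _ => ⟨C.toNNReal + 1, fun i => ?_⟩
  have hempty : {x | C.toNNReal + 1 ≤ ‖f i x‖₊} = ∅ := by
    refine eq_empty_of_forall_notMem fun x hx => ?_
    have : ‖f i x‖ < C.toNNReal + 1 := (hC i x).trans_lt (by linarith [C.le_coe_toNNReal])
    exact (not_le.2 this) (by exact_mod_cast hx)
  rw [hempty, indicator_empty, eLpNorm_zero']
  exact zero_le

theorem tendsto_toLp_of_tendsto_ae_of_norm_le [IsFiniteMeasure μ] [Fact (1 ≤ p)] (hp : p ≠ ∞)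
    {f : ℕ → α → β} {g : α → β} (hf : ∀ n, MemLp (f n) p μ) (hg : MemLp g p μ) {C : ℝ}
    (hC : ∀ n x, ‖f n x‖ ≤ C) (hfg : ∀ᵐ x ∂μ, Tendsto (fun n => f n x) atTop (𝓝 (g x))) :
    Tendsto (fun n => (hf n).toLp (f n)) atTop (𝓝 (hg.toLp g)) := by
  rw [Lp.tendsto_Lp_iff_tendsto_eLpNorm']
  refine (tendsto_Lp_finite_of_tendsto_ae Fact.out hp (fun n => (hf n).1) hg
    (unifIntegrable_of_norm_le Fact.out hp (fun n => (hf n).1) hC) hfg).congr fun n => ?_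
  exact eLpNorm_congr_ae ((hf n).coeFn_toLp.sub hg.coeFn_toLp).symm

end UnifIntegrable

noncomputable def ratRightLim (h : ℚ → ℝ) (t : ℝ) : ℝ := ⨅ q : {q : ℚ // t < q}, h q

section ratRightLim

variable {h : ℚ → ℝ} {t x : ℝ}

instance (t : ℝ) : Nonempty {q : ℚ // t < q} :=
  let ⟨q, hq⟩ := exists_rat_gt t
  ⟨⟨q, hq⟩⟩

theorem ratRightLim_le (hh : BddBelow (range h)) {q : ℚ} (hq : t < q) : ratRightLim h t ≤ h q :=
  ciInf_le (f := fun q : {q : ℚ // t < q} => h q)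
    (hh.mono (range_comp_subset_range Subtype.val h)) ⟨q, hq⟩

theorem le_ratRightLim (hx : ∀ q : ℚ, t < q → x ≤ h q) : x ≤ ratRightLim h t :=
  le_ciInf fun q => hx q q.2

theorem exists_lt_of_ratRightLim_lt (hx : ratRightLim h t < x) : ∃ q : ℚ, t < q ∧ h q < x :=
  let ⟨q, hq⟩ := exists_lt_of_ciInf_lt hx
  ⟨q, q.2, hq⟩

theorem ratRightLim_mono (hh : BddBelow (range h)) : Monotone (ratRightLim h) :=
  fun _ _ hst => le_ratRightLim fun _ hq => ratRightLim_le hh (hst.trans_lt hq)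

theorem ratRightLim_mem_Icc {a b : ℝ} (hh : ∀ q, h q ∈ Icc a b) (t : ℝ) :
    ratRightLim h t ∈ Icc a b :=
  let ⟨q, hq⟩ := exists_rat_gt t
  ⟨le_ratRightLim fun q _ => (hh q).1,
    (ratRightLim_le ⟨a, forall_mem_range.2 fun q => (hh q).1⟩ hq).trans (hh q).2⟩

theorem continuousWithinAt_ratRightLim (hh : BddBelow (range h)) (t : ℝ) :
    ContinuousWithinAt (ratRightLim h) (Ici t) t := by
  refine tendsto_order.2 ⟨fun a ha => ?_, fun b hb => ?_⟩
  · exact eventually_nhdsWithin_of_forall fun s hs => ha.trans_le (ratRightLim_mono hh hs)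
  · obtain ⟨q, htq, hqb⟩ := exists_lt_of_ratRightLim_lt hb
    filter_upwards [Ico_mem_nhdsGE htq] with s hs
    exact (ratRightLim_le hh hs.2).trans_lt hqb

theorem ratRightLim_comp_coe {g : ℝ → ℝ} (hg : Monotone g)
    (hc : ContinuousWithinAt g (Ici t) t) : ratRightLim (fun q : ℚ => g q) t = g t := by
  refine le_antisymm (le_of_forall_gt fun b hb => ?_) (le_ratRightLim fun q hq => hg hq.le)
  obtain ⟨u, htu, hu⟩ := mem_nhdsGT_iff_exists_Ioo_subset.1
    (nhdsWithin_mono t Ioi_subset_Ici_self (hc.eventually (gt_mem_nhds hb)))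
  obtain ⟨q, htq, hqu⟩ := exists_rat_btwn (mem_Ioi.1 htu)
  have hbdd : BddBelow (range fun q : {q : ℚ // t < q} => g q) :=
    ⟨g t, forall_mem_range.2 fun q => hg q.2.le⟩
  exact (ciInf_le hbdd ⟨q, htq⟩).trans_lt (hu ⟨htq, hqu⟩)

theorem tendsto_ratRightLim {ι : Type*} {l : Filter ι} {H : ι → ℚ → ℝ} (hH : ∀ i, Monotone (H i))
    (hHb : ∀ i, BddBelow (range (H i))) (hh : BddBelow (range h))
    (hlim : ∀ q, Tendsto (fun i => H i q) l (𝓝 (h q))) (hc : ContinuousAt (ratRightLim h) t) :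
    Tendsto (fun i => ratRightLim (H i) t) l (𝓝 (ratRightLim h t)) := by
  refine tendsto_order.2 ⟨fun a ha => ?_, fun b hb => ?_⟩
  · obtain ⟨s, hst, hs⟩ := (hc.eventually (lt_mem_nhds ha)).exists_lt
    obtain ⟨p, hsp, hpt⟩ := exists_rat_btwn hst
    filter_upwards [(hlim p).eventually (lt_mem_nhds (hs.trans_le (ratRightLim_le hh hsp)))]
      with i hi
    exact hi.trans_le (le_ratRightLim fun q hq => hH i (by exact_mod_cast (hpt.trans hq).le))
  · obtain ⟨q, htq, hqb⟩ := exists_lt_of_ratRightLim_lt hb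
    filter_upwards [(hlim q).eventually (gt_mem_nhds hqb)] with i hi
    exact (ratRightLim_le (hHb i) htq).trans_lt hi

end ratRightLim

def ratMonotoneUnit : Set (ℚ → ℝ) := {h | Monotone h ∧ ∀ q, h q ∈ Icc 0 1}

section ratMonotoneUnit

variable {h : ℚ → ℝ}

theorem isCompact_ratMonotoneUnit : IsCompact ratMonotoneUnit :=
  isCompact_setOf_monotone_forall_mem_Icc 0 1

theorem bddBelow_range_of_mem_ratMonotoneUnit (hh : h ∈ ratMonotoneUnit) : BddBelow (range h) :=
  ⟨0, forall_mem_range.2 fun q => (hh.2 q).1⟩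

theorem norm_ratRightLim_le_one (hh : h ∈ ratMonotoneUnit) (t : ℝ) : ‖ratRightLim h t‖ ≤ 1 := by
  obtain ⟨h0, h1⟩ := ratRightLim_mem_Icc hh.2 t
  rwa [Real.norm_of_nonneg h0]

theorem memLp_ratRightLim (μ : Measure ℝ) [IsFiniteMeasure μ] (p : ℝ≥0∞)
    (hh : h ∈ ratMonotoneUnit) : MemLp (ratRightLim h) p μ :=
  have hmono := ratRightLim_mono (bddBelow_range_of_mem_ratMonotoneUnit hh)
  .of_bound hmono.measurable.aestronglyMeasurable 1 (ae_of_all _ (norm_ratRightLim_le_one hh))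

theorem continuous_toLp_ratRightLim (μ : Measure ℝ) [IsFiniteMeasure μ] [NullSingletonClass μ]
    (p : ℝ≥0∞) [Fact (1 ≤ p)] (hp : p ≠ ∞) :
    Continuous fun h : ratMonotoneUnit => (memLp_ratRightLim μ p h.2).toLp := by
  refine continuous_iff_seqContinuous.2 fun H h hHh => ?_
  have hlim (q : ℚ) : Tendsto (fun n => (H n : ℚ → ℝ) q) atTop (𝓝 ((h : ℚ → ℝ) q)) :=
    ((continuous_apply q).comp continuous_subtype_val).continuousAt.tendsto.comp hHh
  have hcont : ∀ᵐ t ∂μ, ContinuousAt (ratRightLim h) t :=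
    (ratRightLim_mono (bddBelow_range_of_mem_ratMonotoneUnit h.2)).countable_not_continuousAt
      |>.measure_zero μ
  refine tendsto_toLp_of_tendsto_ae_of_norm_le hp (fun n => memLp_ratRightLim μ p (H n).2) _
    (fun n => norm_ratRightLim_le_one (H n).2) ?_
  filter_upwards [hcont] with t ht
  exact tendsto_ratRightLim (fun n => (H n).2.1)
    (fun n => bddBelow_range_of_mem_ratMonotoneUnit (H n).2)
    (bddBelow_range_of_mem_ratMonotoneUnit h.2) hlim ht

end ratMonotoneUnit

theorem IsG0.mem_Icc {g : ℝ → ℝ} (hg : IsG0 g) (t : ℝ) : g t ∈ Icc (0 : ℝ) 1 := by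
  obtain ⟨-, hbound, -, h1, hneg, hgt⟩ := hg
  rcases lt_or_ge t 0 with ht0 | ht0
  · rw [hneg t ht0]
    exact hbound 0 ⟨le_rfl, one_pos⟩
  rcases lt_trichotomy t 1 with ht1 | rfl | ht1
  · exact hbound t ⟨ht0, ht1⟩
  · rw [h1]
    exact right_mem_Icc.2 zero_le_one
  · rw [hgt t ht1]
    exact right_mem_Icc.2 zero_le_one

theorem IsG0.monotone {g : ℝ → ℝ} (hg : IsG0 g) : Monotone g := by
  intro s t hst
  have hbound := hg.mem_Icc
  obtain ⟨hmono, -, -, -, hneg, hgt⟩ := hg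
  rcases lt_or_ge 1 t with ht1 | ht1
  · rw [hgt t ht1]
    exact (hbound s).2
  rcases lt_or_ge t 0 with ht0 | ht0
  · rw [hneg t ht0, hneg s (hst.trans_lt ht0)]
  rcases lt_or_ge s 0 with hs0 | hs0
  · rw [hneg s hs0]
    exact hmono (left_mem_Icc.2 zero_le_one) ⟨ht0, ht1⟩ ht0
  · exact hmono ⟨hs0, hst.trans ht1⟩ ⟨ht0, ht1⟩ hst

theorem IsG0.comp_coe_mem_ratMonotoneUnit {g : ℝ → ℝ} (hg : IsG0 g) :
    (fun q : ℚ => g q) ∈ ratMonotoneUnit :=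
  ⟨fun _ _ hpq => hg.monotone (Rat.cast_le.2 hpq), fun q => hg.mem_Icc q⟩

theorem IsG0.ratRightLim_comp_coe {g : ℝ → ℝ} (hg : IsG0 g) {t : ℝ} (ht : t ∈ Ico 0 1) :
    ratRightLim (fun q : ℚ => g q) t = g t :=
  _root_.ratRightLim_comp_coe hg.monotone (hg.2.2.1 t ht)

noncomputable def g0OfRat (h : ℚ → ℝ) (t : ℝ) : ℝ := if t < 1 then ratRightLim h (max t 0) else 1

section g0OfRat

variable {h : ℚ → ℝ}

theorem g0OfRat_eq_ratRightLim {t : ℝ} (ht : t ∈ Ico 0 1) : g0OfRat h t = ratRightLim h t := by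
  rw [g0OfRat, if_pos ht.2, max_eq_left ht.1]

theorem g0OfRat_monotone (hh : h ∈ ratMonotoneUnit) : Monotone (g0OfRat h) := by
  intro s t hst
  unfold g0OfRat
  split_ifs with hs ht ht
  · exact ratRightLim_mono (bddBelow_range_of_mem_ratMonotoneUnit hh) (max_le_max_right 0 hst)
  · exact (ratRightLim_mem_Icc hh.2 _).2
  · linarith
  · rfl

theorem isG0_g0OfRat (hh : h ∈ ratMonotoneUnit) : IsG0 (g0OfRat h) := by
  refine ⟨(g0OfRat_monotone hh).monotoneOn _, fun t ht => ?_, fun t ht => ?_, by simp [g0OfRat],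
    fun t ht => ?_, fun t ht => by simp [g0OfRat, not_lt.2 ht.le]⟩
  · rw [g0OfRat_eq_ratRightLim ht]
    exact ratRightLim_mem_Icc hh.2 t
  · refine (continuousWithinAt_ratRightLim (bddBelow_range_of_mem_ratMonotoneUnit hh) t)
      |>.congr_of_eventuallyEq ?_ (g0OfRat_eq_ratRightLim ht)
    filter_upwards [Ico_mem_nhdsGE ht.2] with s hs
    exact g0OfRat_eq_ratRightLim ⟨ht.1.trans hs.1, hs.2⟩
  · simp [g0OfRat, ht.trans one_pos, max_eq_right ht.le]

end g0OfRat

theorem ae_restrict_Icc_mem_Ico {μ : Measure ℝ} [NullSingletonClass μ] {a b : ℝ} :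
    ∀ᵐ t ∂μ.restrict (Icc a b), t ∈ Ico a b :=
  Measure.restrict_congr_set (Ico_ae_eq_Icc (μ := μ) (a := a) (b := b)) ▸
    ae_restrict_mem measurableSet_Ico

theorem setOf_isG0_eq_range_toLp_ratRightLim (p : ℝ≥0∞) :
    {f : Lp ℝ p (volume.restrict (Icc (0 : ℝ) 1)) |
      ∃ g : ℝ → ℝ, IsG0 g ∧ f =ᵐ[volume.restrict (Icc (0 : ℝ) 1)] g} =
      range fun h : ratMonotoneUnit => (memLp_ratRightLim _ p h.2).toLp := by
  ext f
  constructor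
  · rintro ⟨g, hg, hfg⟩
    refine ⟨⟨_, hg.comp_coe_mem_ratMonotoneUnit⟩, Lp.ext ?_⟩
    refine (MemLp.coeFn_toLp _).trans (EventuallyEq.trans ?_ hfg.symm)
    filter_upwards [ae_restrict_Icc_mem_Ico] with t ht
    exact hg.ratRightLim_comp_coe ht
  · rintro ⟨h, rfl⟩
    refine ⟨g0OfRat h, isG0_g0OfRat h.2, (MemLp.coeFn_toLp _).trans ?_⟩
    filter_upwards [ae_restrict_Icc_mem_Ico] with t ht
    exact (g0OfRat_eq_ratRightLim ht).symm

/-- `G₀`, regarded as a subset of `L²([0,1])`, is compact. -/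
theorem G0_isCompact :
    IsCompact {f : Lp ℝ 2 (volume.restrict (Set.Icc (0:ℝ) 1)) |
      ∃ g : ℝ → ℝ, IsG0 g ∧ (⇑f) =ᵐ[volume.restrict (Set.Icc (0:ℝ) 1)] g} := by
  rw [setOf_isG0_eq_range_toLp_ratRightLim 2]
  have := isCompact_iff_compactSpace.1 isCompact_ratMonotoneUnit
  exact isCompact_range (continuous_toLp_ratRightLim _ 2 ENNReal.ofNat_ne_top)
end

section
/- If q₁(dx) = ρ(x)dx is a measure on (0,1) with continuous density ρ satisfying ρ(y)·ρ(x/y)·(1/y) = ρ(x)·ρ((y−x)/(1−x))·(1/(1−x)) for all 0 < x < y < 1, then there exists a constant C ≥ 0 such that ρ(x) = C/(x(1−x)) for all 0 < x < 1. -/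
/-!
Write `F = logitDensity ρ`, so `F x = x (1 - x) ρ x` is the density of `ρ(x) dx` with respect
to `dx / (x (1 - x))`. The functional equation becomes `F y F (x / y) = F x F ((y - x) / (1 - x))`.
Reading it once for the pair `(m u, m)` and once for the complementary pair `(s, m)` with
`(m - s) / (1 - s) = m u` shows that, whenever `F m ≠ 0`, `F` is invariant under the involution
`u ↦ (1 - u) / (1 - m u)` of `(0, 1)`. By continuity this holds for all `m` near one such `m₀`,
and since these involutions move any given point through a whole open interval, `F` is locally
constant, hence constant on `(0, 1)`.
-/

open Set Filter Topology

def logitDensity (ρ : ℝ → ℝ) (x : ℝ) : ℝ := x * (1 - x) * ρ x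

lemma logitDensity_functional_equation {ρ : ℝ → ℝ}
    (heq : ∀ x y : ℝ, 0 < x → x < y → y < 1 →
      ρ y * ρ (x / y) * (1 / y) = ρ x * ρ ((y - x) / (1 - x)) * (1 / (1 - x)))
    {x y : ℝ} (hx : 0 < x) (hxy : x < y) (hy : y < 1) :
    logitDensity ρ y * logitDensity ρ (x / y) =
      logitDensity ρ x * logitDensity ρ ((y - x) / (1 - x)) := by
  have h := heq x y hx hxy hy
  have hy0 : y ≠ 0 := by linarith
  have hx1 : 1 - x ≠ 0 := by linarith
  unfold logitDensity
  field_simp at h ⊢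
  linear_combination ((y - x) * (1 - y)) * h

section

variable {F : ℝ → ℝ}

lemma invariant_of_functional_equation_of_ne_zero
    (hF : ∀ x y : ℝ, 0 < x → x < y → y < 1 → F y * F (x / y) = F x * F ((y - x) / (1 - x)))
    {m u : ℝ} (hm : m ∈ Ioo (0 : ℝ) 1) (hu : u ∈ Ioo (0 : ℝ) 1) (hFm : F m ≠ 0) :
    F u = F ((1 - u) / (1 - m * u)) := by
  obtain ⟨hm0, hm1⟩ := hm
  obtain ⟨hu0, hu1⟩ := hu
  have hum : 0 < 1 - m * u := by nlinarith
  set s := m * (1 - u) / (1 - m * u) with hs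
  have hs0 : 0 < s := by positivity
  have hsm : s < m := by
    rw [hs, div_lt_iff₀ hum]
    nlinarith [mul_pos (mul_pos hu0 hm0) (sub_pos.2 hm1)]
  have h₁ := hF (m * u) m (by positivity) (by nlinarith) hm1
  have h₂ := hF s m hs0 hsm hm1
  have e₁ : m * u / m = u := mul_div_cancel_left₀ u hm0.ne'
  have e₂ : (m - m * u) / (1 - m * u) = s := by rw [hs]; ring
  have e₃ : s / m = (1 - u) / (1 - m * u) := by rw [hs]; field_simp
  have e₄ : (m - s) / (1 - s) = m * u := by
    have h1s : 1 - s = (1 - m) / (1 - m * u) := by rw [hs]; field_simp; ring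
    rw [h1s, hs]
    field_simp
    ring
  rw [e₁, e₂] at h₁
  rw [e₃, e₄] at h₂
  exact mul_left_cancel₀ hFm (by rw [h₁, h₂, mul_comm])

lemma eventually_eq_of_invariant_near {m₀ : ℝ} (hm₀ : m₀ ∈ Ioo (0 : ℝ) 1)
    (hσ : ∀ᶠ m in 𝓝 m₀, ∀ u ∈ Ioo (0 : ℝ) 1, F u = F ((1 - u) / (1 - m * u)))
    {v : ℝ} (hv : v ∈ Ioo (0 : ℝ) 1) : ∀ᶠ v' in 𝓝 v, F v' = F v := by
  obtain ⟨hm0, hm1⟩ := hm₀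
  obtain ⟨hv0, hv1⟩ := hv
  have hmv : 0 < 1 - m₀ * v := by nlinarith
  set w := (1 - v) / (1 - m₀ * v) with hw
  have hw0 : 0 < w := div_pos (by linarith) hmv
  have hw1 : w < 1 := by rw [hw, div_lt_one hmv]; nlinarith
  have hFv : F v = F w := hσ.self_of_nhds v ⟨hv0, hv1⟩
  -- `μ v'` is the `m` for which `(1 - w) / (1 - m w) = v'`
  set μ : ℝ → ℝ := fun v' => (v' - (1 - w)) / (w * v') with hμ
  have hμv : μ v = m₀ := by
    have hwd : w * (1 - m₀ * v) = 1 - v := div_mul_cancel₀ _ hmv.ne'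
    rw [hμ, div_eq_iff (by positivity)]
    linear_combination hwd
  have hμ_tendsto : Tendsto μ (𝓝 v) (𝓝 m₀) := by
    rw [← hμv]
    exact ContinuousAt.div (by fun_prop) (by fun_prop) (by positivity)
  filter_upwards [hμ_tendsto.eventually hσ, Ioi_mem_nhds hv0] with v' hv' hv'0
  have hσ_w : (1 - w) / (1 - μ v' * w) = v' := by
    have h1w : 1 - w ≠ 0 := by linarith
    have : 1 - μ v' * w = (1 - w) / v' := by
      rw [hμ]
      field_simp [(show v' ≠ 0 from ne_of_gt hv'0)]
      ring
    rw [this, div_div_cancel₀ h1w]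
  rw [hFv, hv' w ⟨hw0, hw1⟩, hσ_w]

lemma exists_const_of_functional_equation (hcont : ContinuousOn F (Ioo 0 1))
    (hF : ∀ x y : ℝ, 0 < x → x < y → y < 1 → F y * F (x / y) = F x * F ((y - x) / (1 - x))) :
    ∃ C, ∀ x ∈ Ioo (0 : ℝ) 1, F x = C := by
  by_cases hzero : ∀ x ∈ Ioo (0 : ℝ) 1, F x = 0
  · exact ⟨0, hzero⟩
  push Not at hzero
  obtain ⟨m₀, hm₀, hFm₀⟩ := hzero
  have hσ : ∀ᶠ m in 𝓝 m₀, ∀ u ∈ Ioo (0 : ℝ) 1, F u = F ((1 - u) / (1 - m * u)) := by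
    have hIoo := Ioo_mem_nhds hm₀.1 hm₀.2
    filter_upwards [hIoo, (hcont.continuousAt hIoo).eventually_ne hFm₀] with m hm hFm u hu
    exact invariant_of_functional_equation_of_ne_zero hF hm hu hFm
  refine ⟨F m₀, fun x hx ↦ isPreconnected_Ioo.induction₂ (fun a b ↦ F a = F b) ?_ ?_ ?_ hx hm₀⟩
  · exact fun a ha ↦ nhdsWithin_le_nhds <|
      (eventually_eq_of_invariant_near hm₀ hσ ha).mono fun _ h ↦ h.symm
  · exact fun _ _ _ _ _ _ ↦ Eq.trans
  · exact fun _ _ _ _ ↦ Eq.symm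

end

/-- If a continuous density `ρ` on `(0,1)` satisfies the functional equation
`ρ(y)·ρ(x/y)·(1/y) = ρ(x)·ρ((y−x)/(1−x))·(1/(1−x))` for all `0 < x < y < 1`, then
`ρ(x) = C/(x(1−x))` for some constant `C ≥ 0`. -/
theorem density_functional_equation (ρ : ℝ → ℝ)
    (hcont : ContinuousOn ρ (Set.Ioo 0 1))
    (hnn : ∀ x ∈ Set.Ioo (0:ℝ) 1, 0 ≤ ρ x)
    (heq : ∀ x y : ℝ, 0 < x → x < y → y < 1 →
      ρ y * ρ (x / y) * (1 / y) = ρ x * ρ ((y - x) / (1 - x)) * (1 / (1 - x))) :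
    ∃ C : ℝ, 0 ≤ C ∧ ∀ x ∈ Set.Ioo (0:ℝ) 1, ρ x = C / (x * (1 - x)) := by
  have hFcont : ContinuousOn (logitDensity ρ) (Ioo 0 1) := by
    unfold logitDensity
    fun_prop
  obtain ⟨C, hC⟩ := exists_const_of_functional_equation hFcont
    fun x y hx hxy hy ↦ logitDensity_functional_equation heq hx hxy hy
  have hhalf : (1 / 2 : ℝ) ∈ Ioo 0 1 := by norm_num
  refine ⟨C, ?_, fun x hx ↦ ?_⟩
  · rw [← hC _ hhalf, logitDensity]
    have := hnn _ hhalf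
    positivity
  · rw [eq_div_iff (mul_pos hx.1 (sub_pos.2 hx.2)).ne', ← hC x hx, logitDensity]
    ring
end

section
/- Let h ∈ G be a C²-diffeomorphism of S¹ with h′ > 0 and let g ∈ G be a monotone map of S¹. Then the infinite product Y⁰_h(g) = ∏_{a ∈ J_g} √(h′(g(a−))·h′(g(a+))) / ((h(g(a+))−h(g(a−)))/(g(a+)−g(a−))) over the jump set J_g of g converges absolutely, and |log Y⁰_h(g)| ≤ sup|（log h′)′| uniformly in g. -/
/-!
Write `ψ = log h′`. At a jump `u = g(a−) < v = g(a+)` the mean value theorem gives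
`(h v − h u)/(v − u) = h′ ξ` with `ξ ∈ (u, v)`, so the logarithm of the factor at `a` is
`(ψ u + ψ v)/2 − ψ ξ`, which is at most `L (v − u)/2` in absolute value, where
`L = sup |ψ′|` is finite because `ψ′` is continuous and `1`-periodic. The jumps `v − u`
are the atoms of the Stieltjes measure of `g`, which gives `[0, 1)` mass `1`, so they sum
to at most `1`.
-/

/-- Monotone maps of `S¹ = ℝ/ℤ`, represented by right-continuous nondecreasing maps
`g : ℝ → ℝ` with `g(x+1) = g(x)+1`. -/
def IsGR (g : ℝ → ℝ) : Prop :=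
  Monotone g ∧ (∀ t : ℝ, ContinuousWithinAt g (Set.Ici t) t) ∧ ∀ x, g (x + 1) = g x + 1

/-- The jump locations of `g` (in one period `[0,1)`). -/
def jumpSet (g : ℝ → ℝ) : Set ℝ :=
  {a | a ∈ Set.Ico (0:ℝ) 1 ∧ Function.leftLim g a ≠ g a}

/-- The factor of the product `Y⁰_h(g)` at a jump location `a`:
`√(h′(g(a−))·h′(g(a+))) / ((h(g(a+))−h(g(a−)))/(g(a+)−g(a−)))`. -/
noncomputable def Yterm (h g : ℝ → ℝ) (a : ℝ) : ℝ :=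
  Real.sqrt (deriv h (Function.leftLim g a) * deriv h (g a)) /
    ((h (g a) - h (Function.leftLim g a)) / (g a - Function.leftLim g a))

open Set Filter Function MeasureTheory ENNReal Real

lemma MeasureTheory.tsum_measure_singleton_le {α : Type*} [MeasurableSpace α]
    [MeasurableSingletonClass α] (μ : Measure α) (s : Set α) :
    ∑' a : s, μ {(a : α)} ≤ μ s := by
  simpa using tsum_meas_le_meas_iUnion_of_disjoint μ (As := fun a : s => {(a : α)})
    (fun _ => measurableSet_singleton _)
    (fun a b hab => disjoint_singleton.2 (Subtype.coe_injective.ne hab))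

namespace StieltjesFunction

variable (f : StieltjesFunction ℝ) {s : Set ℝ}

lemma jump_eq_toReal_measure_singleton (a : ℝ) :
    f a - leftLim f a = (f.measure {a}).toReal := by
  rw [measure_singleton, toReal_ofReal (sub_nonneg.2 (f.mono.leftLim_le le_rfl))]

lemma summable_jump (hs : f.measure s ≠ ∞) : Summable fun a : s => f a - leftLim f a := by
  simp_rw [jump_eq_toReal_measure_singleton]
  exact ENNReal.summable_toReal (ne_top_of_le_ne_top hs (tsum_measure_singleton_le _ s))

lemma tsum_jump_le (hs : f.measure s ≠ ∞) :
    ∑' a : s, (f a - leftLim f a) ≤ (f.measure s).toReal := by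
  simp_rw [jump_eq_toReal_measure_singleton]
  rw [← ENNReal.tsum_toReal_eq fun a => measure_singleton_lt_top.ne]
  exact toReal_mono hs (tsum_measure_singleton_le _ s)

end StieltjesFunction

namespace IsGR

variable {g : ℝ → ℝ} (hg : IsGR g)
include hg

lemma leftLim_add_one (x : ℝ) : leftLim g (x + 1) = leftLim g x + 1 := by
  apply leftLim_eq_of_tendsto
  rw [← map_add_right_nhdsLT, tendsto_map'_iff, show g ∘ (· + 1) = (g · + 1) from funext hg.2.2]
  exact (hg.1.tendsto_leftLim x).add_const 1

def toStieltjes : StieltjesFunction ℝ := ⟨g, hg.1, hg.2.1⟩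

lemma measure_Ico_zero_one : hg.toStieltjes.measure (Ico 0 1) = 1 := by
  simp [toStieltjes, StieltjesFunction.measure_Ico, by simpa using hg.leftLim_add_one 0]

lemma measure_jumpSet_le_one : hg.toStieltjes.measure (jumpSet g) ≤ 1 :=
  hg.measure_Ico_zero_one ▸ measure_mono fun _ ha => ha.1

lemma summable_jump : Summable fun a : jumpSet g => g a - leftLim g a :=
  hg.toStieltjes.summable_jump (ne_top_of_le_ne_top one_ne_top hg.measure_jumpSet_le_one)

lemma tsum_jump_le_one : ∑' a : jumpSet g, (g a - leftLim g a) ≤ 1 :=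
  calc ∑' a : jumpSet g, (g a - leftLim g a)
      ≤ (hg.toStieltjes.measure (jumpSet g)).toReal :=
        hg.toStieltjes.tsum_jump_le (ne_top_of_le_ne_top one_ne_top hg.measure_jumpSet_le_one)
    _ ≤ 1 := toReal_le_of_le_ofReal zero_le_one (by simpa using hg.measure_jumpSet_le_one)

end IsGR

lemma periodic_deriv_of_add_const {f : ℝ → ℝ} {c d : ℝ} (hf : ∀ x, f (x + c) = f x + d) :
    (deriv f).Periodic c := fun x => by
  rw [← deriv_comp_add_const, show (f <| · + c) = (f · + d) from funext hf, deriv_add_const]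

lemma Function.Periodic.abs_sub_le_iSup_abs_deriv_mul {ψ : ℝ → ℝ} {c : ℝ}
    (hper : ψ.Periodic c) (hc : c ≠ 0) (hψ : ContDiff ℝ 1 ψ) (x y : ℝ) :
    |ψ y - ψ x| ≤ (⨆ z, |deriv ψ z|) * |y - x| := by
  have hper' : (deriv ψ).Periodic c := periodic_deriv_of_add_const (d := 0) (by simpa using hper)
  have hbdd : BddAbove (range fun z => |deriv ψ z|) :=
    ((hper'.comp abs).isBounded_of_continuous hc hψ.continuous_deriv_one.abs).bddAbove
  simpa [Real.norm_eq_abs] using Convex.norm_image_sub_le_of_norm_deriv_le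
    (fun z _ => hψ.differentiable one_ne_zero z) (fun z _ => le_ciSup hbdd z)
    convex_univ (mem_univ x) (mem_univ y)

lemma abs_log_sqrt_mul_deriv_div_slope_le {h : ℝ → ℝ} (hd : Differentiable ℝ h)
    (hpos : ∀ x, 0 < deriv h x) {L : ℝ}
    (hlip : ∀ x y, |log (deriv h y) - log (deriv h x)| ≤ L * |y - x|) {u v : ℝ} (huv : u < v) :
    |log (√(deriv h u * deriv h v) / ((h v - h u) / (v - u)))| ≤ L / 2 * (v - u) := by
  obtain ⟨ξ, ⟨huξ, hξv⟩, hξ⟩ :=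
    exists_deriv_eq_slope h huv hd.continuous.continuousOn hd.differentiableOn
  have hlog : log (√(deriv h u * deriv h v) / ((h v - h u) / (v - u))) =
      (log (deriv h u) + log (deriv h v)) / 2 - log (deriv h ξ) := by
    have hprod := mul_pos (hpos u) (hpos v)
    rw [← hξ, log_div (sqrt_pos.2 hprod).ne' (hpos ξ).ne', log_sqrt hprod.le,
      log_mul (hpos u).ne' (hpos v).ne']
  have hu : |log (deriv h u) - log (deriv h ξ)| ≤ L * (ξ - u) := by
    simpa [abs_of_neg (sub_neg.2 huξ)] using hlip ξ u
  have hv : |log (deriv h v) - log (deriv h ξ)| ≤ L * (v - ξ) := by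
    simpa [abs_of_pos (sub_pos.2 hξv)] using hlip ξ v
  rw [abs_le] at hu hv
  rw [hlog, abs_le]
  constructor <;> linarith

/-- For a `C²`-diffeomorphism `h` of `S¹` with `h′ > 0` and a monotone map `g` of `S¹`,
the infinite product defining `Y⁰_h(g)` converges absolutely, and
`|log Y⁰_h(g)| ≤ sup |(log h′)′|`, uniformly in `g`. -/
theorem Yzero_product_converges (g h : ℝ → ℝ)
    (hg : IsGR g) (hh : IsGR h) (hh2 : ContDiff ℝ 2 h) (hh' : ∀ x, 0 < deriv h x) :
    Summable (fun a : jumpSet g => Real.log (Yterm h g a)) ∧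
    Summable (fun a : jumpSet g => |Real.log (Yterm h g a)|) ∧
    |∑' a : jumpSet g, Real.log (Yterm h g a)| ≤
      ⨆ x : ℝ, |deriv (fun y => Real.log (deriv h y)) x| := by
  set L := ⨆ x : ℝ, |deriv (fun y => Real.log (deriv h y)) x|
  have hL : 0 ≤ L := Real.iSup_nonneg fun _ => abs_nonneg _
  have hlip : ∀ x y, |log (deriv h y) - log (deriv h x)| ≤ L * |y - x| :=
    ((periodic_deriv_of_add_const hh.2.2).comp log).abs_sub_le_iSup_abs_deriv_mul one_ne_zero
      (((contDiff_succ_iff_deriv.1 hh2).2.2).log fun x => (hh' x).ne')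
  have hterm (a : jumpSet g) : |log (Yterm h g a)| ≤ L / 2 * (g a - leftLim g a) :=
    abs_log_sqrt_mul_deriv_div_slope_le (hh2.differentiable two_ne_zero) hh' hlip
      ((hg.1.leftLim_le le_rfl).lt_of_ne a.2.2)
  have habs : Summable fun a : jumpSet g => |log (Yterm h g a)| :=
    hg.summable_jump.mul_left (L / 2) |>.of_nonneg_of_le (fun _ => abs_nonneg _) hterm
  refine ⟨habs.of_abs, habs, ?_⟩
  calc |∑' a : jumpSet g, log (Yterm h g a)|
      ≤ ∑' a : jumpSet g, |log (Yterm h g a)| := by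
        simpa only [Real.norm_eq_abs] using norm_tsum_le_tsum_norm habs.of_abs.norm
    _ ≤ ∑' a : jumpSet g, L / 2 * (g a - leftLim g a) :=
        habs.tsum_le_tsum hterm (hg.summable_jump.mul_left _)
    _ = L / 2 * ∑' a : jumpSet g, (g a - leftLim g a) := tsum_mul_left
    _ ≤ L / 2 * 1 := by gcongr; exact hg.tsum_jump_le_one
    _ ≤ L := by linarith
end

section
/- Let h be a C²-diffeomorphism of S¹ and g ∈ G. Then lim_{k→∞} ∏_{i=0}^{k−1} [(h(g(t_{i+1})) − h(g(t_i)))/(g(t_{i+1}) − g(t_i))]^{β(t_{i+1}−t_i)} = exp(β ∫₀¹ log h′(g(s)) ds), where t_i = i/k. -/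
/-! A mean value point `ξ` of `h` on `[g(tᵢ), g(tᵢ₊₁)]` turns the logarithm of the product into the
Riemann-type sum `(1/k) ∑ log h′(ξᵢ)` times `β`. Since `φ = log h′` is uniformly continuous on
the compact range of `g` on `[0,1]`, it satisfies `|φ x - φ y| ≤ ε + C |x - y|` there, so the sum
differs from `∫₀¹ log h′(g(s)) ds` by at most `ε + C (g 1 - g 0) / k`: the intervals on which `g`
jumps contribute through their total increment, which is bounded. -/

open scoped Classical

/-- The difference quotient `(h(g(t_{i+1})) − h(g(t_i)))/(g(t_{i+1}) − g(t_i))`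
(interpreted as `h′(g(t_i))` when `g(t_{i+1}) = g(t_i)`). -/
noncomputable def diffQuot (h g : ℝ → ℝ) (u v : ℝ) : ℝ :=
  if g v = g u then deriv h (g u) else (h (g v) - h (g u)) / (g v - g u)

open Set Filter Topology MeasureTheory

theorem IsCompact.exists_dist_le_add_mul_dist {α β : Type*} [PseudoMetricSpace α]
    [PseudoMetricSpace β] {K : Set α} (hK : IsCompact K) {φ : α → β} (hφ : ContinuousOn φ K)
    {ε : ℝ} (hε : 0 < ε) :
    ∃ C, 0 ≤ C ∧ ∀ x ∈ K, ∀ y ∈ K, dist (φ x) (φ y) ≤ ε + C * dist x y := by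
  obtain ⟨δ, hδ, hφδ⟩ :=
    Metric.uniformContinuousOn_iff.1 (hK.uniformContinuousOn_of_continuous hφ) ε hε
  have hbdd : Bornology.IsBounded (φ '' K) := (hK.image_of_continuousOn hφ).isBounded
  set D := Metric.diam (φ '' K)
  refine ⟨D / δ, div_nonneg Metric.diam_nonneg hδ.le, fun x hx y hy => ?_⟩
  rcases lt_or_ge (dist x y) δ with hnear | hfar
  · have : 0 ≤ D / δ * dist x y := mul_nonneg (div_nonneg Metric.diam_nonneg hδ.le) dist_nonneg
    linarith [hφδ x hx y hy hnear]
  · calc dist (φ x) (φ y) ≤ D := Metric.dist_le_diam_of_mem hbdd (mem_image_of_mem φ hx)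
          (mem_image_of_mem φ hy)
      _ = D / δ * δ := (div_mul_cancel₀ D hδ.ne').symm
      _ ≤ D / δ * dist x y := by gcongr
      _ ≤ ε + D / δ * dist x y := le_add_of_nonneg_left hε.le

theorem Real.prod_rpow_eq_exp_mul_sum_log {ι : Type*} {s : Finset ι} {a : ι → ℝ}
    (ha : ∀ i ∈ s, 0 < a i) (c : ℝ) :
    ∏ i ∈ s, a i ^ c = Real.exp (c * ∑ i ∈ s, Real.log (a i)) := by
  rw [Finset.mul_sum, Real.exp_sum]
  exact Finset.prod_congr rfl fun i hi => by rw [Real.rpow_def_of_pos (ha i hi), mul_comm]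

section MonotoneComp

variable {g φ : ℝ → ℝ}

theorem Monotone.exists_mem_Icc_diffQuot_eq_deriv {h : ℝ → ℝ} (hg : Monotone g)
    (hh : Differentiable ℝ h) {u v : ℝ} (huv : u ≤ v) :
    ∃ ξ ∈ Icc (g u) (g v), diffQuot h g u v = deriv h ξ := by
  rcases (hg huv).eq_or_lt with heq | hlt
  · exact ⟨g u, left_mem_Icc.2 heq.le, by simp [diffQuot, heq]⟩
  · obtain ⟨ξ, hξ, hslope⟩ := exists_hasDerivAt_eq_slope h (deriv h) hlt
      hh.continuous.continuousOn fun x _ => (hh x).hasDerivAt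
    exact ⟨ξ, Ioo_subset_Icc_self hξ, by rw [diffQuot, if_neg hlt.ne', hslope]⟩

theorem Monotone.intervalIntegrable_comp (hg : Monotone g) (hφ : Continuous φ) (a b : ℝ) :
    IntervalIntegrable (fun s => φ (g s)) volume a b := by
  obtain ⟨M, hM⟩ := isCompact_Icc.exists_bound_of_continuousOn
    (hφ.continuousOn (s := Icc (g (min a b)) (g (max a b))))
  rw [intervalIntegrable_iff]
  refine Measure.integrableOn_of_bounded (M := M) measure_Ioc_lt_top.ne
    (hφ.measurable.comp hg.measurable).aestronglyMeasurable
    ((ae_restrict_iff' measurableSet_Ioc).2 (ae_of_all _ fun s hs => hM _ ?_))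
  have hs' : s ∈ uIcc a b := uIoc_subset_uIcc hs
  exact ⟨hg hs'.1, hg hs'.2⟩

theorem Monotone.abs_mul_sub_integral_comp_le (hg : Monotone g) {u v ξ ε C : ℝ} (huv : u ≤ v)
    (hint : IntervalIntegrable (fun s => φ (g s)) volume u v) (hC : 0 ≤ C)
    (hφ : ∀ x ∈ Icc (g u) (g v), ∀ y ∈ Icc (g u) (g v), dist (φ x) (φ y) ≤ ε + C * dist x y)
    (hξ : ξ ∈ Icc (g u) (g v)) :
    |(v - u) * φ ξ - ∫ s in u..v, φ (g s)| ≤ (v - u) * (ε + C * (g v - g u)) := by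
  have hpoint : ∀ s ∈ uIoc u v, ‖φ ξ - φ (g s)‖ ≤ ε + C * (g v - g u) := by
    intro s hs
    rw [uIoc_of_le huv] at hs
    have hgs : g s ∈ Icc (g u) (g v) := ⟨hg hs.1.le, hg hs.2⟩
    calc ‖φ ξ - φ (g s)‖ = dist (φ ξ) (φ (g s)) := (dist_eq_norm _ _).symm
      _ ≤ ε + C * dist ξ (g s) := hφ ξ hξ (g s) hgs
      _ ≤ ε + C * (g v - g u) := by
          gcongr
          rw [Real.dist_eq, abs_le]
          constructor <;> linarith [hξ.1, hξ.2, hgs.1, hgs.2]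
  have hconst : (v - u) * φ ξ = ∫ _ in u..v, φ ξ := by
    rw [intervalIntegral.integral_const, smul_eq_mul]
  rw [hconst, ← intervalIntegral.integral_sub intervalIntegrable_const hint, ← Real.norm_eq_abs]
  calc ‖∫ s in u..v, (φ ξ - φ (g s))‖ ≤ (ε + C * (g v - g u)) * |v - u| :=
        intervalIntegral.norm_integral_le_of_norm_le_const hpoint
    _ = (v - u) * (ε + C * (g v - g u)) := by rw [abs_of_nonneg (sub_nonneg.2 huv), mul_comm]

theorem Monotone.abs_riemannSum_sub_integral_comp_le (hg : Monotone g) (hφc : Continuous φ)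
    {k : ℕ} (hk : k ≠ 0) {ε C : ℝ} (hC : 0 ≤ C)
    (hφ : ∀ x ∈ Icc (g 0) (g 1), ∀ y ∈ Icc (g 0) (g 1), dist (φ x) (φ y) ≤ ε + C * dist x y)
    {f : ℕ → ℝ} (hf : ∀ i < k, ∃ ξ ∈ Icc (g (i / k)) (g ((i + 1) / k)), f i = φ ξ) :
    |(1 / k) * ∑ i ∈ Finset.range k, f i - ∫ s in (0 : ℝ)..1, φ (g s)|
      ≤ ε + C * (g 1 - g 0) / k := by
  set t : ℕ → ℝ := fun i => i / k with ht_def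
  have hk₀ : (0 : ℝ) < k := Nat.cast_pos.2 (Nat.pos_of_ne_zero hk)
  have hstep : ∀ i, t (i + 1) - t i = 1 / k := fun i => by simp only [ht_def]; push_cast; ring
  have hmem : ∀ i ≤ k, t i ∈ Icc (0 : ℝ) 1 := fun i hi =>
    ⟨by positivity, div_le_one_of_le₀ (Nat.cast_le.2 hi) hk₀.le⟩
  have hintegral : ∑ i ∈ Finset.range k, ∫ s in t i..t (i + 1), φ (g s)
      = ∫ s in (0 : ℝ)..1, φ (g s) := by
    rw [intervalIntegral.sum_integral_adjacent_intervals fun i _ =>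
      hg.intervalIntegrable_comp hφc _ _]
    simp [ht_def, hk₀.ne']
  have hincrements : ∑ i ∈ Finset.range k, (g (t (i + 1)) - g (t i)) = g 1 - g 0 := by
    rw [Finset.sum_range_sub (fun i => g (t i))]
    simp [ht_def, hk₀.ne']
  have hterm : ∀ i ∈ Finset.range k, |(t (i + 1) - t i) * f i - ∫ s in t i..t (i + 1), φ (g s)|
      ≤ (t (i + 1) - t i) * (ε + C * (g (t (i + 1)) - g (t i))) := by
    intro i hi
    have hi : i < k := Finset.mem_range.1 hi
    obtain ⟨ξ, hξ, hfi⟩ := hf i hi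
    rw [hfi]
    have hsub : Icc (g (t i)) (g (t (i + 1))) ⊆ Icc (g 0) (g 1) :=
      Icc_subset_Icc (hg (hmem i hi.le).1) (hg (hmem (i + 1) hi).2)
    refine hg.abs_mul_sub_integral_comp_le (by linarith [hstep i, one_div_pos.2 hk₀])
      (hg.intervalIntegrable_comp hφc _ _) hC
      (fun x hx y hy => hφ x (hsub hx) y (hsub hy)) ?_
    simpa [ht_def] using hξ
  calc |(1 / k) * ∑ i ∈ Finset.range k, f i - ∫ s in (0 : ℝ)..1, φ (g s)|
      = |∑ i ∈ Finset.range k,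
          ((t (i + 1) - t i) * f i - ∫ s in t i..t (i + 1), φ (g s))| := by
        simp only [hstep, Finset.sum_sub_distrib, ← Finset.mul_sum, hintegral]
    _ ≤ ∑ i ∈ Finset.range k, (t (i + 1) - t i) * (ε + C * (g (t (i + 1)) - g (t i))) :=
        (Finset.abs_sum_le_sum_abs _ _).trans (Finset.sum_le_sum hterm)
    _ = ε + C * (g 1 - g 0) / k := by
        simp only [hstep, ← Finset.mul_sum, Finset.sum_add_distrib, Finset.sum_const,
          Finset.card_range, nsmul_eq_mul, hincrements]
        field_simp

theorem Monotone.tendsto_riemannSum_comp (hg : Monotone g) (hφ : Continuous φ)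
    {f : ℕ → ℕ → ℝ}
    (hf : ∀ k : ℕ, ∀ i < k, ∃ ξ ∈ Icc (g ((i : ℝ) / k)) (g ((i + 1) / k)), f k i = φ ξ) :
    Tendsto (fun k : ℕ => (1 / k) * ∑ i ∈ Finset.range k, f k i) atTop
      (𝓝 (∫ s in (0 : ℝ)..1, φ (g s))) := by
  refine Metric.tendsto_atTop.2 fun ε hε => ?_
  obtain ⟨C, hC, hφC⟩ := isCompact_Icc.exists_dist_le_add_mul_dist
    (hφ.continuousOn (s := Icc (g 0) (g 1))) (half_pos hε)
  have hsmall : ∀ᶠ k : ℕ in atTop, C * (g 1 - g 0) / k < ε / 2 :=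
    (tendsto_const_div_atTop_nhds_zero_nat _).eventually (gt_mem_nhds (half_pos hε))
  obtain ⟨N, hN⟩ := (hsmall.and (eventually_ne_atTop 0)).exists_forall_of_atTop
  refine ⟨N, fun k hk => ?_⟩
  obtain ⟨hkε, hk₀⟩ := hN k hk
  rw [Real.dist_eq]
  linarith [hg.abs_riemannSum_sub_integral_comp_le hφ hk₀ hC hφC (hf k)]

end MonotoneComp

theorem X_approx_limit_general (g h : ℝ → ℝ) (β : ℝ)
    (hg : IsGR g) (hh2 : ContDiff ℝ 2 h) (hh' : ∀ x, 0 < deriv h x) :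
    Filter.Tendsto
      (fun k : ℕ => ∏ i ∈ Finset.range k,
        (diffQuot h g ((i : ℝ) / k) (((i : ℝ) + 1) / k)) ^ (β * (1 / (k : ℝ))))
      Filter.atTop
      (nhds (Real.exp (β * ∫ s in (0:ℝ)..1, Real.log (deriv h (g s))))) := by
  obtain ⟨hg_mono, -, -⟩ := hg
  have hmvt : ∀ k i : ℕ, ∃ ξ ∈ Icc (g ((i : ℝ) / k)) (g ((i + 1) / k)),
      diffQuot h g ((i : ℝ) / k) ((i + 1) / k) = deriv h ξ := fun k i =>
    hg_mono.exists_mem_Icc_diffQuot_eq_deriv (hh2.differentiable two_ne_zero)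
      (div_le_div_of_nonneg_right (by linarith) k.cast_nonneg)
  have hriemann := hg_mono.tendsto_riemannSum_comp
    ((hh2.continuous_deriv one_le_two).log fun x => (hh' x).ne')
    (f := fun k i => Real.log (diffQuot h g ((i : ℝ) / k) ((i + 1) / k)))
    fun k i _ => (hmvt k i).imp fun ξ ⟨hξ, hdq⟩ => ⟨hξ, by rw [hdq]⟩
  refine ((Real.continuous_exp.tendsto _).comp (hriemann.const_mul β)).congr fun k => ?_
  have hpos : ∀ i ∈ Finset.range k, 0 < diffQuot h g ((i : ℝ) / k) ((i + 1) / k) := fun i _ =>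
    let ⟨ξ, _, hdq⟩ := hmvt k i; hdq ▸ hh' ξ
  rw [Function.comp_apply, Real.prod_rpow_eq_exp_mul_sum_log hpos, mul_assoc]

/-- `lim_{k→∞} ∏_{i=0}^{k−1} [(h(g(t_{i+1}))−h(g(t_i)))/(g(t_{i+1})−g(t_i))]^{β(t_{i+1}−t_i)}
  = exp(β ∫₀¹ log h′(g(s)) ds)` where `t_i = i/k`. -/
theorem X_approx_limit (g h : ℝ → ℝ) (β : ℝ) (hβ : 0 < β)
    (hg : IsGR g) (hh : IsGR h) (hh2 : ContDiff ℝ 2 h) (hh' : ∀ x, 0 < deriv h x) :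
    Filter.Tendsto
      (fun k : ℕ => ∏ i ∈ Finset.range k,
        (diffQuot h g ((i : ℝ) / k) (((i : ℝ) + 1) / k)) ^ (β * (1 / (k : ℝ))))
      Filter.atTop
      (nhds (Real.exp (β * ∫ s in (0:ℝ)..1, Real.log (deriv h (g s))))) :=
  X_approx_limit_general g h β hg hh2 hh'
end

section
/- Let φ ∈ C^∞(S¹,ℝ) and g ∈ G. Then the sum V⁰_φ(g) = Σ_{a∈J_g} [ (φ′(g(a+)) + φ′(g(a−)))/2 − (φ(g(a+)) − φ(g(a−)))/(g(a+) − g(a−)) ] over the jumps of g converges absolutely and |V⁰_φ(g)| ≤ (1/2)∫_{S¹}|φ″(x)| dx. -/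
/-- The summand of the drift term `V⁰_φ(g)` at a jump location `a`:
`(φ′(g(a+)) + φ′(g(a−)))/2 − (φ(g(a+)) − φ(g(a−)))/(g(a+) − g(a−))`. -/
noncomputable def Vterm (φ g : ℝ → ℝ) (a : ℝ) : ℝ :=
  (deriv φ (g a) + deriv φ (Function.leftLim g a)) / 2 -
    (φ (g a) - φ (Function.leftLim g a)) / (g a - Function.leftLim g a)

open MeasureTheory intervalIntegral Set Filter Function

/-- Trapezoid-rule error bound for a C² function. -/
theorem vterm_bound (φ : ℝ → ℝ) (hφ : ContDiff ℝ (⊤ : ℕ∞) φ) {u v : ℝ} (huv : u < v) :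
    |(deriv φ v + deriv φ u) / 2 - (φ v - φ u) / (v - u)| ≤
      (1 / 2) * ∫ x in u..v, |deriv (deriv φ) x| := by
  have hφ' : ContDiff ℝ ((⊤ : ℕ∞) : WithTop ℕ∞) φ := hφ.of_le (by simp)
  have hφ1 : Differentiable ℝ φ := hφ'.differentiable (by simp)
  have hd : ContDiff ℝ ((⊤ : ℕ∞) : WithTop ℕ∞) (deriv φ) := (contDiff_infty_iff_deriv.mp hφ').2
  have hφ2 : Differentiable ℝ (deriv φ) := hd.differentiable (by simp)
  have hc2 : Continuous (deriv (deriv φ)) := (contDiff_infty_iff_deriv.mp hd).2.continuous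
  have hc1 : Continuous (deriv φ) := hd.continuous
  set m : ℝ := (u + v) / 2 with hm
  have hne : v - u ≠ 0 := sub_ne_zero.mpr huv.ne'
  have key : ∫ x in u..v, (x - m) * deriv (deriv φ) x
      = (v - m) * deriv φ v - (u - m) * deriv φ u - ∫ x in u..v, 1 * deriv φ x := by
    apply intervalIntegral.integral_mul_deriv_eq_deriv_mul
    · exact fun x _ => (hasDerivAt_id x).sub_const m
    · exact fun x _ => (hφ2 x).hasDerivAt
    · exact intervalIntegrable_const
    · exact hc2.intervalIntegrable _ _
  have hfund : ∫ x in u..v, deriv φ x = φ v - φ u :=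
    integral_deriv_eq_sub (fun x _ => hφ1 x) (hc1.intervalIntegrable _ _)
  simp only [one_mul, hfund] at key
  have heq : (deriv φ v + deriv φ u) / 2 - (φ v - φ u) / (v - u)
      = (∫ x in u..v, (x - m) * deriv (deriv φ) x) / (v - u) := by
    rw [key, hm]
    field_simp
    ring
  rw [heq, abs_div, abs_of_pos (sub_pos.mpr huv)]
  have h1 : |∫ x in u..v, (x - m) * deriv (deriv φ) x|
      ≤ ∫ x in u..v, |(x - m) * deriv (deriv φ) x| :=
    intervalIntegral.abs_integral_le_integral_abs huv.le
  have h2 : ∫ x in u..v, |(x - m) * deriv (deriv φ) x|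
      ≤ ∫ x in u..v, ((v - u) / 2) * |deriv (deriv φ) x| := by
    apply intervalIntegral.integral_mono_on huv.le
    · exact (((continuous_id.sub continuous_const).mul hc2).abs).intervalIntegrable _ _
    · exact (continuous_const.mul hc2.abs).intervalIntegrable _ _
    · intro x hx
      rw [abs_mul]
      apply mul_le_mul_of_nonneg_right _ (abs_nonneg _)
      rw [abs_le]
      cases' hx with ha hb
      constructor <;> simp only [hm] <;> linarith
  have h3 : ∫ x in u..v, ((v - u) / 2) * |deriv (deriv φ) x|
      = ((v - u) / 2) * ∫ x in u..v, |deriv (deriv φ) x| := by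
    rw [intervalIntegral.integral_const_mul]
  have hint_nonneg : 0 ≤ ∫ x in u..v, |deriv (deriv φ) x| :=
    intervalIntegral.integral_nonneg huv.le (fun x _ => abs_nonneg _)
  rw [div_le_iff₀ (sub_pos.mpr huv)]
  calc |∫ x in u..v, (x - m) * deriv (deriv φ) x|
      ≤ ((v - u) / 2) * ∫ x in u..v, |deriv (deriv φ) x| := h1.trans (h2.trans_eq h3)
    _ = 1 / 2 * (∫ x in u..v, |deriv (deriv φ) x|) * (v - u) := by ring

/-- For smooth periodic `φ` (a smooth function on `S¹`) and `g ∈ G`, the sum defining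
`V⁰_φ(g)` converges absolutely and is bounded by `(1/2)∫_{S¹}|φ″|`. -/
theorem Vzero_summable (φ g : ℝ → ℝ)
    (hφ : ContDiff ℝ (⊤ : ℕ∞) φ) (hφper : ∀ x, φ (x + 1) = φ x) (hg : IsGR g) :
    Summable (fun a : jumpSet g => Vterm φ g a) ∧
    (∑' a : jumpSet g, |Vterm φ g a|) ≤ (1 / 2) * ∫ x in (0:ℝ)..1, |deriv (deriv φ) x| := by
  obtain ⟨hmono, -, hper⟩ := hg
  have hφ' : ContDiff ℝ ((⊤ : ℕ∞) : WithTop ℕ∞) φ := hφ.of_le (by simp)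
  have hd : ContDiff ℝ ((⊤ : ℕ∞) : WithTop ℕ∞) (deriv φ) := (contDiff_infty_iff_deriv.mp hφ').2
  have hc2 : Continuous (deriv (deriv φ)) := (contDiff_infty_iff_deriv.mp hd).2.continuous
  have habs : Continuous fun x => |deriv (deriv φ) x| := hc2.abs
  -- periodicity of the second derivative
  have hper1 : ∀ x, deriv φ (x + 1) = deriv φ x := by
    intro x
    have h1 : (fun y => φ (y + 1)) = φ := funext hφper
    have := deriv_comp_add_const φ 1 x
    rw [h1] at this
    exact this.symm
  have hper2 : ∀ x, deriv (deriv φ) (x + 1) = deriv (deriv φ) x := by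
    intro x
    have h1 : (fun y => deriv φ (y + 1)) = deriv φ := funext hper1
    have := deriv_comp_add_const (deriv φ) 1 x
    rw [h1] at this
    exact this.symm
  set c : ℝ := Function.leftLim g 0 with hc
  -- left limit at 1
  have hll1 : Function.leftLim g 1 = c + 1 := by
    have h0 : Tendsto (fun x : ℝ => x - 1) (nhdsWithin (1:ℝ) (Set.Iio 1)) (nhdsWithin (0:ℝ) (Set.Iio 0)) := by
      apply tendsto_nhdsWithin_of_tendsto_nhds_of_eventually_within
      · have h : Tendsto (fun x : ℝ => x - 1) (nhds (1:ℝ)) (nhds ((1:ℝ) - 1)) :=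
          (continuous_sub_right (1:ℝ)).tendsto 1
        simp only [sub_self] at h
        exact h.mono_left nhdsWithin_le_nhds
      · filter_upwards [self_mem_nhdsWithin] with x hx
        simp only [Set.mem_Iio] at hx ⊢
        linarith
    have h2 : Tendsto g (nhdsWithin (1:ℝ) (Set.Iio 1)) (nhds (c + 1)) := by
      have h3 := ((hmono.tendsto_leftLim 0).comp h0).add_const 1
      have h4 : (fun x : ℝ => g (x - 1) + 1) = g := by
        funext x
        have := hper (x - 1)
        simpa using this.symm
      simpa [Function.comp, h4] using h3
    exact tendsto_nhds_unique (hmono.tendsto_leftLim 1) h2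
  -- basic facts about jumps
  have hlt : ∀ a : jumpSet g, Function.leftLim g a.1 < g a.1 :=
    fun a => lt_of_le_of_ne (hmono.leftLim_le le_rfl) a.2.2
  have hcle : ∀ a : jumpSet g, c ≤ Function.leftLim g a.1 := by
    intro a
    rcases eq_or_lt_of_le a.2.1.1 with h | h
    · exact le_of_eq (by rw [← h])
    · exact (hmono.leftLim_le le_rfl).trans (hmono.le_leftLim h)
  have hle1 : ∀ a : jumpSet g, g a.1 ≤ c + 1 := by
    intro a
    rw [← hll1]
    exact hmono.le_leftLim a.2.1.2
  -- the integral bound function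
  set F : jumpSet g → ℝ := fun a => ∫ x in (Function.leftLim g a.1)..(g a.1), |deriv (deriv φ) x| with hF
  have hVF : ∀ a : jumpSet g, |Vterm φ g a.1| ≤ (1 / 2) * F a := fun a => vterm_bound φ hφ (hlt a)
  have hFnn : ∀ a : jumpSet g, 0 ≤ F a :=
    fun a => intervalIntegral.integral_nonneg (hlt a).le fun x _ => abs_nonneg _
  -- disjointness
  have hdisj : ∀ a b : jumpSet g, a ≠ b →
      Disjoint (Set.Ioc (Function.leftLim g a.1) (g a.1)) (Set.Ioc (Function.leftLim g b.1) (g b.1)) := by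
    intro a b hab
    have hab' : a.1 ≠ b.1 := fun h => hab (Subtype.ext h)
    rw [Set.Ioc_disjoint_Ioc]
    rcases hab'.lt_or_gt with h | h
    · exact min_le_of_left_le ((hmono.le_leftLim h).trans (le_max_right _ _))
    · exact min_le_of_right_le ((hmono.le_leftLim h).trans (le_max_left _ _))
  have hsub : ∀ a : jumpSet g,
      Set.Ioc (Function.leftLim g a.1) (g a.1) ⊆ Set.Ioc c (c + 1) :=
    fun a => Set.Ioc_subset_Ioc (hcle a) (hle1 a)
  have hIbig : IntegrableOn (fun x => |deriv (deriv φ) x|) (Set.Ioc c (c + 1)) volume :=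
    habs.integrableOn_Ioc
  -- partial sums bounded
  have hsumF : ∀ s : Finset (jumpSet g), ∑ a ∈ s, F a ≤ ∫ x in c..(c + 1), |deriv (deriv φ) x| := by
    intro s
    have h1 : ∀ a : jumpSet g,
        F a = ∫ x in Set.Ioc (Function.leftLim g a.1) (g a.1), |deriv (deriv φ) x| := by
      intro a
      rw [hF]
      exact intervalIntegral.integral_of_le (hlt a).le
    have hUsub : (⋃ a ∈ s, Set.Ioc (Function.leftLim g a.1) (g a.1)) ⊆ Set.Ioc c (c + 1) :=
      Set.iUnion₂_subset fun a _ => hsub a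
    have h2 : ∑ a ∈ s, F a
        = ∫ x in (⋃ a ∈ s, Set.Ioc (Function.leftLim g a.1) (g a.1)), |deriv (deriv φ) x| := by
      simp_rw [h1]
      rw [← MeasureTheory.integral_biUnion_finset s (fun a _ => measurableSet_Ioc)
        (fun a _ b _ hab => hdisj a b hab) (fun a _ => hIbig.mono_set (hsub a))]
    rw [h2, intervalIntegral.integral_of_le (by linarith : c ≤ c + 1)]
    exact setIntegral_mono_set hIbig (Filter.Eventually.of_forall fun x => abs_nonneg _)
      (HasSubset.Subset.eventuallyLE hUsub)
  -- value of the big integral by periodicity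
  have hCper : (∫ x in c..(c + 1), |deriv (deriv φ) x|) = ∫ x in (0:ℝ)..1, |deriv (deriv φ) x| := by
    have hp : Function.Periodic (fun x => |deriv (deriv φ) x|) 1 := fun x => by simp only [hper2]
    have := hp.intervalIntegral_add_eq c 0
    simpa using this
  have hbound : ∀ s : Finset (jumpSet g),
      ∑ a ∈ s, |Vterm φ g a.1| ≤ (1 / 2) * ∫ x in (0:ℝ)..1, |deriv (deriv φ) x| := by
    intro s
    calc ∑ a ∈ s, |Vterm φ g a.1| ≤ ∑ a ∈ s, (1 / 2) * F a :=
          Finset.sum_le_sum fun a _ => hVF a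
      _ = (1 / 2) * ∑ a ∈ s, F a := by rw [Finset.mul_sum]
      _ ≤ (1 / 2) * ∫ x in c..(c + 1), |deriv (deriv φ) x| := by
          have := hsumF s; linarith
      _ = (1 / 2) * ∫ x in (0:ℝ)..1, |deriv (deriv φ) x| := by rw [hCper]
  have hsummable : Summable fun a : jumpSet g => |Vterm φ g a.1| :=
    summable_of_sum_le (fun a => abs_nonneg _) hbound
  exact ⟨hsummable.of_abs, hsummable.tsum_le_of_sum_le hbound⟩
end

section
/- For each a ∈ J_g, Taylor's formula gives the exact representation (φ′(g(a+)) + φ′(g(a−)))/2 − (φ(g(a+)) − φ(g(a−)))/(g(a+) − g(a−)) = (1/(2(g(a+)−g(a−)))) ∫_{g(a−)}^{g(a+)} ∫_{g(a−)}^{g(a+)} sgn(y−x)·φ″(y) dy dx, for any C² function φ and any real numbers g(a−) < g(a+). -/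
/-!
On `[a, x]` the weight `sign (y - x)` is `-1` and on `[x, b]` it is `1`, so by the fundamental
theorem of calculus the inner integral of `sign (y - x) φ″(y)` is `φ′(a) + φ′(b) - 2 φ′(x)`.
Integrating once more over `x ∈ [a, b]` gives `(φ′(a) + φ′(b)) (b - a) - 2 (φ(b) - φ(a))`,
which is `2 (b - a)` times the left-hand side.
-/

open Set intervalIntegral
open MeasureTheory (volume)

section SignWeightedIntegral

variable {a b x : ℝ}

lemma eqOn_sign_sub_mul_of_le (f' : ℝ → ℝ) (hxb : x ≤ b) :
    EqOn f' (fun y ↦ Real.sign (y - x) * f' y) (uIoo x b) := by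
  intro y hy
  rw [uIoo_of_le hxb] at hy
  simp [Real.sign_of_pos (sub_pos.mpr hy.1)]

lemma eqOn_sign_sub_mul_of_ge (f' : ℝ → ℝ) (hax : a ≤ x) :
    EqOn (fun y ↦ -f' y) (fun y ↦ Real.sign (y - x) * f' y) (uIoo a x) := by
  intro y hy
  rw [uIoo_of_le hax] at hy
  simp [Real.sign_of_neg (sub_neg.mpr hy.2)]

lemma integral_sign_sub_mul_deriv {f f' : ℝ → ℝ} (hf : ∀ y ∈ uIcc a b, HasDerivAt f (f' y) y)
    (hf' : IntervalIntegrable f' volume a b) (hx : x ∈ Icc a b) :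
    ∫ y in a..b, Real.sign (y - x) * f' y = f a + f b - 2 * f x := by
  have hleft : uIcc a x ⊆ uIcc a b := uIcc_subset_uIcc_left (Icc_subset_uIcc hx)
  have hright : uIcc x b ⊆ uIcc a b := uIcc_subset_uIcc_right (Icc_subset_uIcc hx)
  have hl := eqOn_sign_sub_mul_of_ge f' hx.1
  have hr := eqOn_sign_sub_mul_of_le f' hx.2
  rw [← integral_add_adjacent_intervals ((hf'.mono_set hleft).neg.congr_uIoo hl)
      ((hf'.mono_set hright).congr_uIoo hr),
    ← integral_congr_uIoo hl, ← integral_congr_uIoo hr, intervalIntegral.integral_neg,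
    integral_eq_sub_of_hasDerivAt (fun y hy ↦ hf y (hleft hy)) (hf'.mono_set hleft),
    integral_eq_sub_of_hasDerivAt (fun y hy ↦ hf y (hright hy)) (hf'.mono_set hright)]
  ring

end SignWeightedIntegral

lemma integral_integral_sign_sub_mul_deriv {φ f f' : ℝ → ℝ} {a b : ℝ} (hab : a ≤ b)
    (hφ : ∀ y ∈ uIcc a b, HasDerivAt φ (f y) y) (hf : ∀ y ∈ uIcc a b, HasDerivAt f (f' y) y)
    (hf' : IntervalIntegrable f' volume a b) :
    ∫ x in a..b, ∫ y in a..b, Real.sign (y - x) * f' y =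
      (f a + f b) * (b - a) - 2 * (φ b - φ a) := by
  have hfc : IntervalIntegrable f volume a b :=
    (HasDerivAt.continuousOn hf).intervalIntegrable
  rw [integral_congr (g := fun x ↦ f a + f b - 2 * f x) fun x hx ↦
      integral_sign_sub_mul_deriv hf hf' (by rwa [uIcc_of_le hab] at hx),
    integral_sub intervalIntegrable_const (hfc.const_mul 2), integral_const, integral_const_mul,
    integral_eq_sub_of_hasDerivAt hφ hfc, smul_eq_mul]
  ring

/-- Taylor's formula representation of the jump drift term: for a `C²` function `φ` and
reals `a < b`,
`(φ′(b)+φ′(a))/2 − (φ(b)−φ(a))/(b−a) = (1/(2(b−a))) ∫_a^b ∫_a^b sgn(y−x) φ″(y) dy dx`. -/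
theorem jump_term_taylor_representation (φ : ℝ → ℝ) (hφ : ContDiff ℝ 2 φ)
    (a b : ℝ) (hab : a < b) :
    (deriv φ b + deriv φ a) / 2 - (φ b - φ a) / (b - a) =
      (1 / (2 * (b - a))) *
        ∫ x in a..b, (∫ y in a..b, Real.sign (y - x) * deriv (deriv φ) y) := by
  have hφ' : ContDiff ℝ 1 (deriv φ) := hφ.iterate_deriv' 1 1
  have hφ'' : Continuous (deriv (deriv φ)) := hφ'.continuous_deriv le_rfl
  rw [integral_integral_sign_sub_mul_deriv hab.le
    (fun y _ ↦ (hφ.differentiable two_ne_zero y).hasDerivAt)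
    (fun y _ ↦ (hφ'.differentiable one_ne_zero y).hasDerivAt) (hφ''.intervalIntegrable a b)]
  have hba : b - a ≠ 0 := sub_ne_zero.mpr hab.ne'
  field_simp
  ring
end
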